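/- (Repeated extension lemma, extension version.) Let T_1,…,T_M ∈ ℝ^{TL×TL} (M ≥ 2) be diagonal matrices satisfying the block linear independence condition. Let W ⊆ ℝ^{TL} be a subspace, S ⊆ {1,…,M} a subset, and Δ̄W < a_1 < ⋯ < a_n (n ≥ 0, with a_0 = Δ̄W) a strictly increasing sequence of reals. If n ≤ |S| − M/2, then there exist a subspace W̃ ⊆ ℝ^{TL} and ñ ∈ {0,…,n} such that, with δ = 2·∑_{i=0}^{ñ−1} a_i, one has |dim W̃ − dim W| ≤ δ and sp^{(T)}_{N+δ}(W̃) ≥ sp^{(T)}_N(W) for all N ≥ 0, and at least one of the following holds: (1) ñ ≥ 1 and Δ̄W̃ ≤ 2a_{ñ−1} − a_{ñ}; or (2) ñ = n, Δ̄W̃ ≤ a_n, and there exist distinct k_1,…,k_n ∈ S such that W̃ = e_{T_{k_1}} ⋯ e_{T_{k_n}} W. The same statement holds with W̃ = c_{T_{k_1}} ⋯ c_{T_{k_n}} W in case (2) (contraction version). -/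

import Mathlib

open Matrix Submodule Module

/-- `sp^{(T)}(V) = ∑_{k=1}^L dim(P_k V)`. -/
noncomputable def spT (T L : ℕ) (V : Submodule ℝ (Fin T × Fin L → ℝ)) : ℕ :=
  ∑ k : Fin L, finrank ℝ ↥(V.map (LinearMap.funLeft ℝ ℝ (fun s : Fin T => (s, k))))

/-- The block `N`-sparsity `sp^{(T)}_N(V) = min{sp^{(T)}(W) : W ≤ V, dim W ≥ N}` (in `ℕ∞`). -/
noncomputable def spTN (T L : ℕ) (N : ℕ) (V : Submodule ℝ (Fin T × Fin L → ℝ)) : ℕ∞ :=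
  ⨅ (W : Submodule ℝ (Fin T × Fin L → ℝ)) (_ : W ≤ V) (_ : N ≤ finrank ℝ ↥W),
    (spT T L W : ℕ∞)

/-- The block diagonal matrix `I_T ⊗ diag(d)` on `ℝ^{T×L}`. -/
def blockDiag (T L : ℕ) (d : Fin L → ℝ) : Matrix (Fin T × Fin L) (Fin T × Fin L) ℝ :=
  Matrix.diagonal fun p => d p.2

/-- The block linear independence condition. -/
def BlockLinIndepCond (T L M : ℕ) (t : Fin M → Fin L → ℝ) : Prop :=
  ∀ A : Finset (Fin M → ℤ), A.card = L →
    ∀ V : Submodule ℝ (Fin T × Fin L → ℝ),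
      finrank ℝ ↥(⨆ x ∈ A, V.map (Matrix.toLin'
        (blockDiag T L fun ℓ => ∏ i, t i ℓ ^ x i))) = spT T L V

/-- The extension of a subspace `V` under a matrix `A`: `e_A V = V + A V`. -/
noncomputable def extT {n : Type*} [Fintype n] [DecidableEq n] (A : Matrix n n ℝ)
    (V : Submodule ℝ (n → ℝ)) : Submodule ℝ (n → ℝ) :=
  V ⊔ V.map (Matrix.toLin' A)

/-- The contraction of a subspace `V` under a matrix `A`: `c_A V = V ∩ A V`. -/
noncomputable def conT {n : Type*} [Fintype n] [DecidableEq n] (A : Matrix n n ℝ)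
    (V : Submodule ℝ (n → ℝ)) : Submodule ℝ (n → ℝ) :=
  V ⊓ V.map (Matrix.toLin' A)

/-- The alignment width `Δ_A V = dim(e_A V) − dim V`. -/
noncomputable def widthT {n : Type*} [Fintype n] [DecidableEq n] (A : Matrix n n ℝ)
    (V : Submodule ℝ (n → ℝ)) : ℕ :=
  finrank ℝ ↥(extT A V) - finrank ℝ ↥V

/-- The average alignment width `Δ̄ V = (1/M) ∑_j Δ_{T_j} V`. -/
noncomputable def avgW {n : Type*} [Fintype n] [DecidableEq n] {M : ℕ}
    (Ts : Fin M → Matrix n n ℝ) (V : Submodule ℝ (n → ℝ)) : ℝ :=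
  (∑ j, (widthT (Ts j) V : ℝ)) / M

section AuxLemmas

variable {n : Type*} [Fintype n] [DecidableEq n]

lemma le_extT (A : Matrix n n ℝ) (V : Submodule ℝ (n → ℝ)) : V ≤ extT A V := le_sup_left

lemma conT_le (A : Matrix n n ℝ) (V : Submodule ℝ (n → ℝ)) : conT A V ≤ V := inf_le_left

lemma finrank_extT_eq (A : Matrix n n ℝ) (V : Submodule ℝ (n → ℝ)) :
    finrank ℝ ↥(extT A V) = finrank ℝ ↥V + widthT A V := by
  have h := Submodule.finrank_mono (le_extT A V)
  unfold widthT
  omega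

lemma finrank_ext_add_con (A : Matrix n n ℝ) (hA : Function.Injective (Matrix.toLin' (R := ℝ) A))
    (V : Submodule ℝ (n → ℝ)) :
    finrank ℝ ↥(extT A V) + finrank ℝ ↥(conT A V) = 2 * finrank ℝ ↥V := by
  unfold extT conT
  rw [Submodule.finrank_sup_add_finrank_inf_eq,
    (LinearEquiv.finrank_eq (Submodule.equivMapOfInjective _ hA V)).symm]
  ring

lemma extT_comm (A B : Matrix n n ℝ) (h : A * B = B * A) (V : Submodule ℝ (n → ℝ)) :
    extT B (extT A V) = extT A (extT B V) := by
  have key : ∀ (C D : Matrix n n ℝ), extT D (extT C V) =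
      (V ⊔ V.map (Matrix.toLin' C)) ⊔ (V.map (Matrix.toLin' D) ⊔ V.map (Matrix.toLin' (D * C))) := by
    intro C D
    simp only [extT, Submodule.map_sup, Matrix.toLin'_mul, Submodule.map_comp]
  rw [key A B, key B A, h]
  rw [sup_assoc, sup_assoc, sup_left_comm (V.map (Matrix.toLin' A))]

lemma extT_conT_le (A B : Matrix n n ℝ) (h : A * B = B * A) (V : Submodule ℝ (n → ℝ)) :
    extT B (conT A V) ≤ conT A (extT B V) := by
  unfold extT conT
  apply sup_le
  · exact le_inf (inf_le_left.trans le_sup_left)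
      (inf_le_right.trans (Submodule.map_mono le_sup_left))
  · have h0 : (V ⊓ V.map (Matrix.toLin' A)).map (Matrix.toLin' B) ≤
        V.map (Matrix.toLin' B) ⊓ (V.map (Matrix.toLin' A)).map (Matrix.toLin' B) :=
      Submodule.map_inf_le (Matrix.toLin' B)
    refine h0.trans (le_inf ?_ ?_)
    · exact inf_le_left.trans le_sup_right
    · have e1 : (V.map (Matrix.toLin' A)).map (Matrix.toLin' B) = V.map (Matrix.toLin' (B * A)) := by
        rw [Matrix.toLin'_mul, Submodule.map_comp]
      have e2 : (V.map (Matrix.toLin' B)).map (Matrix.toLin' A) = V.map (Matrix.toLin' (A * B)) := by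
        rw [Matrix.toLin'_mul, Submodule.map_comp]
      refine inf_le_right.trans ?_
      rw [e1, ← h, ← e2]
      exact Submodule.map_mono le_sup_right

lemma width_submodular (A B : Matrix n n ℝ) (hA : Function.Injective (Matrix.toLin' (R := ℝ) A))
    (h : A * B = B * A) (V : Submodule ℝ (n → ℝ)) :
    widthT B (extT A V) + widthT B (conT A V) ≤ 2 * widthT B V := by
  have e1 := finrank_extT_eq B (extT A V)
  have e2 := finrank_extT_eq B (conT A V)
  have e3 := finrank_extT_eq B V
  have e4 := finrank_ext_add_con A hA V
  have e5 := finrank_ext_add_con A hA (extT B V)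
  have i1 : finrank ℝ ↥(extT B (extT A V)) = finrank ℝ ↥(extT A (extT B V)) := by
    rw [extT_comm A B h]
  have i2 : finrank ℝ ↥(extT B (conT A V)) ≤ finrank ℝ ↥(conT A (extT B V)) :=
    Submodule.finrank_mono (extT_conT_le A B h V)
  omega

end AuxLemmas

section Aux2

variable {T L M : ℕ} (Ts : Fin M → Matrix (Fin T × Fin L) (Fin T × Fin L) ℝ)

lemma avgW_nonneg (V : Submodule ℝ (Fin T × Fin L → ℝ)) : 0 ≤ avgW Ts V :=
  div_nonneg (Finset.sum_nonneg fun _ _ => Nat.cast_nonneg _) (Nat.cast_nonneg _)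

lemma markov (hM : 2 ≤ M) (V : Submodule ℝ (Fin T × Fin L → ℝ)) (R : Finset (Fin M))
    (hR : (M : ℝ) < 2 * R.card) :
    ∃ k ∈ R, (widthT (Ts k) V : ℝ) ≤ 2 * avgW Ts V := by
  by_contra hcon
  push_neg at hcon
  have hM0 : (0 : ℝ) < M := by
    have : (2 : ℝ) ≤ M := by exact_mod_cast hM
    linarith
  set Sw := ∑ j, (widthT (Ts j) V : ℝ) with hSw
  have hSw0 : 0 ≤ Sw := Finset.sum_nonneg fun _ _ => Nat.cast_nonneg _
  have hRne : R.Nonempty := by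
    rw [← Finset.card_pos]
    by_contra hc
    push_neg at hc
    interval_cases h : R.card
    · simp at hR; linarith
  have h1 : ∑ _k ∈ R, (2 * avgW Ts V) < ∑ k ∈ R, (widthT (Ts k) V : ℝ) :=
    Finset.sum_lt_sum_of_nonempty hRne fun k hk => hcon k hk
  have h2 : ∑ k ∈ R, (widthT (Ts k) V : ℝ) ≤ Sw :=
    Finset.sum_le_sum_of_subset_of_nonneg (Finset.subset_univ R)
      (fun _ _ _ => Nat.cast_nonneg _)
  rw [Finset.sum_const, nsmul_eq_mul] at h1
  have havg : avgW Ts V = Sw / M := rfl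
  rw [havg] at h1
  have h3 : (R.card : ℝ) * (2 * (Sw / M)) = 2 * R.card * Sw / M := by ring
  rw [h3] at h1
  have h4 : 2 * (R.card : ℝ) * Sw < Sw * M := by
    rw [div_lt_iff₀ hM0] at h1
    have h5 := mul_le_mul_of_nonneg_right h2 hM0.le
    linarith
  nlinarith [mul_le_mul_of_nonneg_right hR.le hSw0]

lemma avgW_submodular (hM0 : (0 : ℝ) < M)
    (hinj : ∀ j, Function.Injective (Matrix.toLin' (R := ℝ) (Ts j)))
    (hcomm : ∀ j k, Ts j * Ts k = Ts k * Ts j)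
    (k : Fin M) (V : Submodule ℝ (Fin T × Fin L → ℝ)) :
    avgW Ts (extT (Ts k) V) + avgW Ts (conT (Ts k) V) ≤ 2 * avgW Ts V := by
  unfold avgW
  rw [← add_div, ← mul_div_assoc]
  apply (div_le_div_iff_of_pos_right hM0).mpr
  rw [← Finset.sum_add_distrib, Finset.mul_sum]
  refine Finset.sum_le_sum fun j _ => ?_
  have h := width_submodular (Ts k) (Ts j) (hinj k) (hcomm k j) V
  push_cast
  exact_mod_cast h

lemma spT_mono {U V : Submodule ℝ (Fin T × Fin L → ℝ)} (h : U ≤ V) : spT T L U ≤ spT T L V :=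
  Finset.sum_le_sum fun _ _ => Submodule.finrank_mono (Submodule.map_mono h)

lemma spTN_key (W W' Z : Submodule ℝ (Fin T × Fin L → ℝ)) (δ c : ℝ)
    (hWZ : W ≤ Z) (hW'Z : W' ≤ Z)
    (hc : (finrank ℝ ↥Z : ℝ) ≤ (finrank ℝ ↥W : ℝ) + c) (hc0 : 0 ≤ c) (hcδ : c ≤ δ) (N : ℕ) :
    spTN T L N W ≤ spTN T L ⌈(N : ℝ) + δ⌉₊ W' := by
  rw [spTN, spTN]
  refine le_iInf fun U => le_iInf fun hU => le_iInf fun hfr => ?_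
  have hUfr : ((N : ℝ) + δ) ≤ (finrank ℝ ↥U : ℝ) := le_trans (Nat.le_ceil _) (by exact_mod_cast hfr)
  have hmod : finrank ℝ ↥(U ⊔ W) + finrank ℝ ↥(U ⊓ W) = finrank ℝ ↥U + finrank ℝ ↥W :=
    Submodule.finrank_sup_add_finrank_inf_eq U W
  have h2 : finrank ℝ ↥(U ⊔ W) ≤ finrank ℝ ↥Z :=
    Submodule.finrank_mono (sup_le (hU.trans hW'Z) hWZ)
  have hN : N ≤ finrank ℝ ↥(U ⊓ W) := by
    have hr : (N : ℝ) + (finrank ℝ ↥Z : ℝ) ≤ (finrank ℝ ↥U : ℝ) + (finrank ℝ ↥W : ℝ) := by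
      linarith
    have hI : N + finrank ℝ ↥Z ≤ finrank ℝ ↥U + finrank ℝ ↥W := by exact_mod_cast hr
    omega
  calc (⨅ (X : Submodule ℝ (Fin T × Fin L → ℝ)) (_ : X ≤ W) (_ : N ≤ finrank ℝ ↥X), (spT T L X : ℕ∞))
      ≤ (spT T L (U ⊓ W) : ℕ∞) :=
        iInf_le_of_le (U ⊓ W) (iInf_le_of_le inf_le_right (iInf_le_of_le hN le_rfl))
    _ ≤ (spT T L U : ℕ∞) := Nat.cast_le.mpr (spT_mono inf_le_left)

end Aux2

set_option maxHeartbeats 2000000 in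
/-- Repeated extension lemma (extension and contraction versions). Under the block linear
independence condition, given a subspace `W`, a subset `S ⊆ {1,…,M}` and a strictly
increasing sequence `Δ̄W = a₀ < a₁ < ⋯ < a_n` with `n ≤ |S| − M/2`, there exist `W̃` and
`ñ ≤ n` such that, with `δ = 2∑_{i<ñ} a_i`, `|dim W̃ − dim W| ≤ δ`,
`sp^{(T)}_{N+δ}(W̃) ≥ sp^{(T)}_N(W)` for all `N`, and either (1) `ñ ≥ 1` and
`Δ̄W̃ ≤ 2a_{ñ−1} − a_ñ`, or (2) `ñ = n`, `Δ̄W̃ ≤ a_n` and `W̃` is obtained from `W` by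
`n` extensions (resp. contractions) along distinct matrices indexed in `S`. -/
theorem stmt15 (T L M : ℕ) (hM : 2 ≤ M) (t : Fin M → Fin L → ℝ)
    (hnz : ∀ i ℓ, t i ℓ ≠ 0) (hli : BlockLinIndepCond T L M t)
    (Ts : Fin M → Matrix (Fin T × Fin L) (Fin T × Fin L) ℝ)
    (hTs : ∀ j, Ts j = blockDiag T L (t j))
    (W : Submodule ℝ (Fin T × Fin L → ℝ)) (S : Finset (Fin M)) (n : ℕ)
    (a : ℕ → ℝ) (ha0 : a 0 = avgW Ts W) (hmono : ∀ i, i < n → a i < a (i + 1))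
    (hn : (n : ℝ) ≤ (S.card : ℝ) - (M : ℝ) / 2) :
    (∃ (W' : Submodule ℝ (Fin T × Fin L → ℝ)) (m : ℕ), m ≤ n ∧
      |(finrank ℝ ↥W' : ℝ) - (finrank ℝ ↥W : ℝ)| ≤ 2 * ∑ i ∈ Finset.range m, a i ∧
      (∀ N : ℕ, spTN T L N W ≤
        spTN T L ⌈(N : ℝ) + 2 * ∑ i ∈ Finset.range m, a i⌉₊ W') ∧
      ((1 ≤ m ∧ avgW Ts W' ≤ 2 * a (m - 1) - a m) ∨
       (m = n ∧ avgW Ts W' ≤ a n ∧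
        ∃ k : Fin n → Fin M, Function.Injective k ∧ (∀ i, k i ∈ S) ∧
          W' = (List.ofFn k).foldr (fun j acc => extT (Ts j) acc) W))) ∧
    (∃ (W' : Submodule ℝ (Fin T × Fin L → ℝ)) (m : ℕ), m ≤ n ∧
      |(finrank ℝ ↥W' : ℝ) - (finrank ℝ ↥W : ℝ)| ≤ 2 * ∑ i ∈ Finset.range m, a i ∧
      (∀ N : ℕ, spTN T L N W ≤
        spTN T L ⌈(N : ℝ) + 2 * ∑ i ∈ Finset.range m, a i⌉₊ W') ∧
      ((1 ≤ m ∧ avgW Ts W' ≤ 2 * a (m - 1) - a m) ∨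
       (m = n ∧ avgW Ts W' ≤ a n ∧
        ∃ k : Fin n → Fin M, Function.Injective k ∧ (∀ i, k i ∈ S) ∧
          W' = (List.ofFn k).foldr (fun j acc => conT (Ts j) acc) W))) := by
  have hM0 : (0 : ℝ) < M := by
    have : (2 : ℝ) ≤ M := by exact_mod_cast hM
    linarith
  have hinj : ∀ j, Function.Injective (Matrix.toLin' (R := ℝ) (Ts j)) := by
    intro j x y hxy
    funext p
    have hp := congrFun hxy p
    rw [hTs j] at hp
    simp only [Matrix.toLin'_apply, _root_.blockDiag, Matrix.mulVec_diagonal] at hp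
    exact mul_left_cancel₀ (hnz j p.2) hp
  have hcomm : ∀ j k, Ts j * Ts k = Ts k * Ts j := by
    intro j k
    rw [hTs j, hTs k]
    unfold _root_.blockDiag
    rw [Matrix.diagonal_mul_diagonal, Matrix.diagonal_mul_diagonal]
    exact congrArg Matrix.diagonal (funext fun p => mul_comm _ _)
  have haN : ∀ i, i ≤ n → 0 ≤ a i := by
    intro i hi
    induction i with
    | zero => rw [ha0]; exact avgW_nonneg Ts W
    | succ i ih =>
      have h1 := hmono i (by omega)
      have h2 := ih (by omega)
      linarith
  have hsum0 : ∀ i, i ≤ n → 0 ≤ ∑ j ∈ Finset.range i, a j := by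
    intro i hi
    refine Finset.sum_nonneg fun j hj => haN j ?_
    have := Finset.mem_range.mp hj
    omega
  constructor
  · -- extension version
    have main1 : ∀ i : ℕ, i ≤ n →
        (∃ (W' : Submodule ℝ (Fin T × Fin L → ℝ)) (m : ℕ), m ≤ n ∧
          |(finrank ℝ ↥W' : ℝ) - (finrank ℝ ↥W : ℝ)| ≤ 2 * ∑ i ∈ Finset.range m, a i ∧
          (∀ N : ℕ, spTN T L N W ≤
            spTN T L ⌈(N : ℝ) + 2 * ∑ i ∈ Finset.range m, a i⌉₊ W') ∧
          ((1 ≤ m ∧ avgW Ts W' ≤ 2 * a (m - 1) - a m) ∨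
           (m = n ∧ avgW Ts W' ≤ a n ∧
            ∃ k : Fin n → Fin M, Function.Injective k ∧ (∀ i, k i ∈ S) ∧
              W' = (List.ofFn k).foldr (fun j acc => extT (Ts j) acc) W))) ∨
        (∃ l : List (Fin M), l.length = i ∧ l.Nodup ∧ (∀ x ∈ l, x ∈ S) ∧
          W ≤ l.foldr (fun j acc => extT (Ts j) acc) W ∧
          (finrank ℝ ↥(l.foldr (fun j acc => extT (Ts j) acc) W) : ℝ) ≤
            (finrank ℝ ↥W : ℝ) + 2 * ∑ j ∈ Finset.range i, a j ∧
          avgW Ts (l.foldr (fun j acc => extT (Ts j) acc) W) ≤ a i) := by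
      intro i
      induction i with
      | zero =>
        intro _
        right
        refine ⟨[], rfl, List.nodup_nil, by simp, le_rfl, by simp; exact le_rfl, ?_⟩
        rw [ha0]
        exact le_rfl
      | succ i ih =>
        intro hi
        rcases ih (by omega) with h | ⟨l, hlen, hnd, hmem, hWle, hfr, havg⟩
        · exact Or.inl h
        set Wi := l.foldr (fun j acc => extT (Ts j) acc) W with hWi
        have hsub : l.toFinset ⊆ S := fun x hx => hmem x (List.mem_toFinset.mp hx)
        have hcardl : l.toFinset.card = i := by
          rw [List.toFinset_card_of_nodup hnd, hlen]
        have hiS : i ≤ S.card := by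
          rw [← hcardl]; exact Finset.card_le_card hsub
        have hcardR : (M : ℝ) < 2 * ((S \ l.toFinset).card : ℝ) := by
          rw [Finset.card_sdiff_of_subset hsub, hcardl]
          have hcast : ((S.card - i : ℕ) : ℝ) = (S.card : ℝ) - i := by
            push_cast [Nat.cast_sub hiS]; ring
          rw [hcast]
          have hin : ((i : ℝ) + 1) ≤ (n : ℝ) := by exact_mod_cast hi
          linarith
        obtain ⟨k, hkR, hkw⟩ := markov Ts hM Wi (S \ l.toFinset) hcardR
        have hkS : k ∈ S := (Finset.mem_sdiff.mp hkR).1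
        have hknl : k ∉ l := fun hkl => (Finset.mem_sdiff.mp hkR).2 (List.mem_toFinset.mpr hkl)
        have hfrWle : finrank ℝ ↥W ≤ finrank ℝ ↥Wi := Submodule.finrank_mono hWle
        have hwa : (widthT (Ts k) Wi : ℝ) ≤ 2 * a i := by linarith
        have hfre : finrank ℝ ↥(extT (Ts k) Wi) = finrank ℝ ↥Wi + widthT (Ts k) Wi :=
          finrank_extT_eq (Ts k) Wi
        by_cases hcont : avgW Ts (extT (Ts k) Wi) ≤ a (i + 1)
        · right
          refine ⟨k :: l, by simp [hlen], List.nodup_cons.mpr ⟨hknl, hnd⟩, ?_, ?_, ?_, ?_⟩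
          · intro x hx
            rcases List.mem_cons.mp hx with h | h
            · rw [h]; exact hkS
            · exact hmem x h
          · simp only [List.foldr_cons]
            rw [← hWi]
            exact hWle.trans (le_extT (Ts k) Wi)
          · simp only [List.foldr_cons]
            change (finrank ℝ ↥(extT (Ts k) Wi) : ℝ) ≤ _
            rw [Finset.sum_range_succ, hfre]
            push_cast
            linarith
          · simp only [List.foldr_cons]
            rw [← hWi]
            exact hcont
        · left
          push_neg at hcont
          have hsubm := avgW_submodular Ts hM0 hinj hcomm k Wi
          have hec := finrank_ext_add_con (Ts k) (hinj k) Wi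
          have hfrc : finrank ℝ ↥(conT (Ts k) Wi) + widthT (Ts k) Wi = finrank ℝ ↥Wi := by
            omega
          refine ⟨conT (Ts k) Wi, i + 1, hi, ?_, ?_, Or.inl ⟨by omega, ?_⟩⟩
          · rw [abs_le]
            have hc1 : (finrank ℝ ↥(conT (Ts k) Wi) : ℝ) + (widthT (Ts k) Wi : ℝ)
                = (finrank ℝ ↥Wi : ℝ) := by exact_mod_cast hfrc
            have hs0 : 0 ≤ ∑ j ∈ Finset.range i, a j := hsum0 i (by omega)
            have hai : 0 ≤ a i := haN i (by omega)
            rw [Finset.sum_range_succ]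
            constructor
            · have : (0 : ℝ) ≤ (widthT (Ts k) Wi : ℝ) := Nat.cast_nonneg _
              have hWlec : (finrank ℝ ↥W : ℝ) ≤ (finrank ℝ ↥Wi : ℝ) := by exact_mod_cast hfrWle
              linarith
            · have hWc : (finrank ℝ ↥(conT (Ts k) Wi) : ℝ) ≤ (finrank ℝ ↥Wi : ℝ) := by
                have := Submodule.finrank_mono (conT_le (Ts k) Wi)
                exact_mod_cast this
              linarith
          · intro N
            refine spTN_key W (conT (Ts k) Wi) Wi _ (2 * ∑ j ∈ Finset.range i, a j)
              hWle (conT_le (Ts k) Wi) hfr (by linarith [hsum0 i (by omega : i ≤ n)]) ?_ N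
            rw [Finset.sum_range_succ]
            have hai : 0 ≤ a i := haN i (by omega)
            linarith
          · have hii : i + 1 - 1 = i := by omega
            rw [hii]
            linarith
    rcases main1 n le_rfl with h | ⟨l, hlen, hnd, hmem, hWle, hfr, havg⟩
    · exact h
    · set Wn := l.foldr (fun j acc => extT (Ts j) acc) W with hWn
      have hfrWle : finrank ℝ ↥W ≤ finrank ℝ ↥Wn := Submodule.finrank_mono hWle
      have hs0 : 0 ≤ ∑ j ∈ Finset.range n, a j := hsum0 n le_rfl
      refine ⟨Wn, n, le_rfl, ?_, ?_, Or.inr ⟨rfl, havg, ?_⟩⟩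
      · rw [abs_le]
        have hWlec : (finrank ℝ ↥W : ℝ) ≤ (finrank ℝ ↥Wn : ℝ) := by exact_mod_cast hfrWle
        constructor <;> linarith
      · intro N
        exact spTN_key W Wn Wn _ (2 * ∑ j ∈ Finset.range n, a j)
          hWle le_rfl hfr (by linarith) le_rfl N
      · refine ⟨fun i => l.get ⟨(i : ℕ), hlen.symm ▸ i.isLt⟩, ?_, ?_, ?_⟩
        · intro x y hxy
          have h2 := List.nodup_iff_injective_get.mp hnd hxy
          exact Fin.val_injective (by simpa using h2)
        · intro i
          exact hmem _ (List.get_mem l _)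
        · have hofn : List.ofFn (fun i : Fin n => l.get ⟨(i : ℕ), hlen.symm ▸ i.isLt⟩) = l := by
            refine List.ext_getElem (by simp [hlen]) ?_
            intro j h1 h2
            simp [List.getElem_ofFn, List.get_eq_getElem]
          rw [hofn]
  · -- contraction version
    have main2 : ∀ i : ℕ, i ≤ n →
        (∃ (W' : Submodule ℝ (Fin T × Fin L → ℝ)) (m : ℕ), m ≤ n ∧
          |(finrank ℝ ↥W' : ℝ) - (finrank ℝ ↥W : ℝ)| ≤ 2 * ∑ i ∈ Finset.range m, a i ∧
          (∀ N : ℕ, spTN T L N W ≤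
            spTN T L ⌈(N : ℝ) + 2 * ∑ i ∈ Finset.range m, a i⌉₊ W') ∧
          ((1 ≤ m ∧ avgW Ts W' ≤ 2 * a (m - 1) - a m) ∨
           (m = n ∧ avgW Ts W' ≤ a n ∧
            ∃ k : Fin n → Fin M, Function.Injective k ∧ (∀ i, k i ∈ S) ∧
              W' = (List.ofFn k).foldr (fun j acc => conT (Ts j) acc) W))) ∨
        (∃ l : List (Fin M), l.length = i ∧ l.Nodup ∧ (∀ x ∈ l, x ∈ S) ∧
          l.foldr (fun j acc => conT (Ts j) acc) W ≤ W ∧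
          (finrank ℝ ↥W : ℝ) ≤
            (finrank ℝ ↥(l.foldr (fun j acc => conT (Ts j) acc) W) : ℝ) +
              2 * ∑ j ∈ Finset.range i, a j ∧
          avgW Ts (l.foldr (fun j acc => conT (Ts j) acc) W) ≤ a i) := by
      intro i
      induction i with
      | zero =>
        intro _
        right
        refine ⟨[], rfl, List.nodup_nil, by simp, le_rfl, by simp; exact le_rfl, ?_⟩
        rw [ha0]
        exact le_rfl
      | succ i ih =>
        intro hi
        rcases ih (by omega) with h | ⟨l, hlen, hnd, hmem, hWle, hfr, havg⟩
        · exact Or.inl h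
        set Wi := l.foldr (fun j acc => conT (Ts j) acc) W with hWi
        have hsub : l.toFinset ⊆ S := fun x hx => hmem x (List.mem_toFinset.mp hx)
        have hcardl : l.toFinset.card = i := by
          rw [List.toFinset_card_of_nodup hnd, hlen]
        have hiS : i ≤ S.card := by
          rw [← hcardl]; exact Finset.card_le_card hsub
        have hcardR : (M : ℝ) < 2 * ((S \ l.toFinset).card : ℝ) := by
          rw [Finset.card_sdiff_of_subset hsub, hcardl]
          have hcast : ((S.card - i : ℕ) : ℝ) = (S.card : ℝ) - i := by
            push_cast [Nat.cast_sub hiS]; ring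
          rw [hcast]
          have hin : ((i : ℝ) + 1) ≤ (n : ℝ) := by exact_mod_cast hi
          linarith
        obtain ⟨k, hkR, hkw⟩ := markov Ts hM Wi (S \ l.toFinset) hcardR
        have hkS : k ∈ S := (Finset.mem_sdiff.mp hkR).1
        have hknl : k ∉ l := fun hkl => (Finset.mem_sdiff.mp hkR).2 (List.mem_toFinset.mpr hkl)
        have hfrWle : finrank ℝ ↥Wi ≤ finrank ℝ ↥W := Submodule.finrank_mono hWle
        have hwa : (widthT (Ts k) Wi : ℝ) ≤ 2 * a i := by linarith
        have hfre : finrank ℝ ↥(extT (Ts k) Wi) = finrank ℝ ↥Wi + widthT (Ts k) Wi :=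
          finrank_extT_eq (Ts k) Wi
        have hec := finrank_ext_add_con (Ts k) (hinj k) Wi
        have hfrc : finrank ℝ ↥(conT (Ts k) Wi) + widthT (Ts k) Wi = finrank ℝ ↥Wi := by
          omega
        by_cases hcont : avgW Ts (conT (Ts k) Wi) ≤ a (i + 1)
        · right
          refine ⟨k :: l, by simp [hlen], List.nodup_cons.mpr ⟨hknl, hnd⟩, ?_, ?_, ?_, ?_⟩
          · intro x hx
            rcases List.mem_cons.mp hx with h | h
            · rw [h]; exact hkS
            · exact hmem x h
          · simp only [List.foldr_cons]
            rw [← hWi]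
            exact (conT_le (Ts k) Wi).trans hWle
          · simp only [List.foldr_cons]
            change (finrank ℝ ↥W : ℝ) ≤ (finrank ℝ ↥(conT (Ts k) Wi) : ℝ) + _
            rw [Finset.sum_range_succ]
            have hc1 : (finrank ℝ ↥(conT (Ts k) Wi) : ℝ) + (widthT (Ts k) Wi : ℝ)
                = (finrank ℝ ↥Wi : ℝ) := by exact_mod_cast hfrc
            linarith
          · simp only [List.foldr_cons]
            rw [← hWi]
            exact hcont
        · left
          push_neg at hcont
          have hsubm := avgW_submodular Ts hM0 hinj hcomm k Wi
          refine ⟨extT (Ts k) Wi, i + 1, hi, ?_, ?_, Or.inl ⟨by omega, ?_⟩⟩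
          · rw [abs_le]
            have hc1 : (finrank ℝ ↥(extT (Ts k) Wi) : ℝ)
                = (finrank ℝ ↥Wi : ℝ) + (widthT (Ts k) Wi : ℝ) := by exact_mod_cast hfre
            have hs0 : 0 ≤ ∑ j ∈ Finset.range i, a j := hsum0 i (by omega)
            have hai : 0 ≤ a i := haN i (by omega)
            have hWlec : (finrank ℝ ↥Wi : ℝ) ≤ (finrank ℝ ↥W : ℝ) := by exact_mod_cast hfrWle
            rw [Finset.sum_range_succ]
            constructor
            · have : (0 : ℝ) ≤ (widthT (Ts k) Wi : ℝ) := Nat.cast_nonneg _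
              linarith
            · linarith
          · intro N
            have hZmod : finrank ℝ ↥(W ⊔ extT (Ts k) Wi) + finrank ℝ ↥(W ⊓ extT (Ts k) Wi)
                = finrank ℝ ↥W + finrank ℝ ↥(extT (Ts k) Wi) :=
              Submodule.finrank_sup_add_finrank_inf_eq W (extT (Ts k) Wi)
            have hWiinf : finrank ℝ ↥Wi ≤ finrank ℝ ↥(W ⊓ extT (Ts k) Wi) :=
              Submodule.finrank_mono (le_inf hWle (le_extT (Ts k) Wi))
            have hZ : finrank ℝ ↥(W ⊔ extT (Ts k) Wi) ≤ finrank ℝ ↥W + widthT (Ts k) Wi := by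
              omega
            have hZc : (finrank ℝ ↥(W ⊔ extT (Ts k) Wi) : ℝ)
                ≤ (finrank ℝ ↥W : ℝ) + 2 * a i := by
              have : (finrank ℝ ↥(W ⊔ extT (Ts k) Wi) : ℝ)
                  ≤ (finrank ℝ ↥W : ℝ) + (widthT (Ts k) Wi : ℝ) := by exact_mod_cast hZ
              linarith
            have hai : 0 ≤ a i := haN i (by omega)
            have hs0 : 0 ≤ ∑ j ∈ Finset.range i, a j := hsum0 i (by omega)
            refine spTN_key W (extT (Ts k) Wi) (W ⊔ extT (Ts k) Wi) _ (2 * a i)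
              le_sup_left le_sup_right hZc (by linarith) ?_ N
            rw [Finset.sum_range_succ]
            linarith
          · have hii : i + 1 - 1 = i := by omega
            rw [hii]
            linarith
    rcases main2 n le_rfl with h | ⟨l, hlen, hnd, hmem, hWle, hfr, havg⟩
    · exact h
    · set Wn := l.foldr (fun j acc => conT (Ts j) acc) W with hWn
      have hfrWle : finrank ℝ ↥Wn ≤ finrank ℝ ↥W := Submodule.finrank_mono hWle
      have hs0 : 0 ≤ ∑ j ∈ Finset.range n, a j := hsum0 n le_rfl
      refine ⟨Wn, n, le_rfl, ?_, ?_, Or.inr ⟨rfl, havg, ?_⟩⟩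
      · rw [abs_le]
        have hWlec : (finrank ℝ ↥Wn : ℝ) ≤ (finrank ℝ ↥W : ℝ) := by exact_mod_cast hfrWle
        constructor <;> linarith
      · intro N
        exact spTN_key W Wn W _ 0 le_rfl hWle (by linarith) le_rfl (by linarith) N
      · refine ⟨fun i => l.get ⟨(i : ℕ), hlen.symm ▸ i.isLt⟩, ?_, ?_, ?_⟩
        · intro x y hxy
          have h2 := List.nodup_iff_injective_get.mp hnd hxy
          exact Fin.val_injective (by simpa using h2)
        · intro i
          exact hmem _ (List.get_mem l _)
        · have hofn : List.ofFn (fun i : Fin n => l.get ⟨(i : ℕ), hlen.symm ▸ i.isLt⟩) = l := by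
            refine List.ext_getElem (by simp [hlen]) ?_
            intro j h1 h2
            simp [List.getElem_ofFn, List.get_eq_getElem]
          rw [hofn]
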